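/- arXiv:2401.15549 — 2 statements merged into one kernel-verified Lean document; each statement's English description precedes it below -/
import Mathlib

section
/- Let G be a connected nontrivial simple graph with m vertices and let n ≥ 2. If min{(3n−2)·λ(G), m + 2·e(G)} ≥ min{2·ξ(G) + 4, 5·δ(G) + 1}, then the strong product G ⊠ P_n is maximally restricted edge-connected, i.e., λ′(G ⊠ P_n) = ξ(G ⊠ P_n). -/
/-- The strong product of two simple graphs. -/
def strongProd {α β : Type*} (G : SimpleGraph α) (H : SimpleGraph β) :
    SimpleGraph (α × β) where
  Adj x y := (x.1 = y.1 ∧ H.Adj x.2 y.2) ∨ (x.2 = y.2 ∧ G.Adj x.1 y.1) ∨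
    (G.Adj x.1 y.1 ∧ H.Adj x.2 y.2)
  symm := by
    constructor
    rintro ⟨a₁, a₂⟩ ⟨b₁, b₂⟩ (⟨h1, h2⟩ | ⟨h1, h2⟩ | ⟨h1, h2⟩)
    · exact Or.inl ⟨h1.symm, h2.symm⟩
    · exact Or.inr (Or.inl ⟨h1.symm, h2.symm⟩)
    · exact Or.inr (Or.inr ⟨h1.symm, h2.symm⟩)
  loopless := by
    constructor
    rintro ⟨a₁, a₂⟩ (⟨_, h⟩ | ⟨_, h⟩ | ⟨h, _⟩)
    · exact H.irrefl h
    · exact G.irrefl h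
    · exact G.irrefl h

/-- The degree of a vertex. -/
noncomputable def deg {α : Type*} (G : SimpleGraph α) (v : α) : ℕ := (G.neighborSet v).ncard

/-- The minimum degree `δ(G)`. -/
noncomputable def minDeg {α : Type*} (G : SimpleGraph α) : ℕ := sInf {d | ∃ v, d = deg G v}

/-- The number of edges `e(G)`. -/
noncomputable def numEdges {α : Type*} (G : SimpleGraph α) : ℕ := G.edgeSet.ncard

/-- The minimum edge-degree `ξ(G) = min {d(u) + d(v) - 2 : uv ∈ E(G)}`. -/
noncomputable def minEdgeDeg {α : Type*} (G : SimpleGraph α) : ℕ :=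
  sInf {d | ∃ u v, G.Adj u v ∧ d = deg G u + deg G v - 2}

/-- The edge-connectivity `λ(G)`. -/
noncomputable def edgeConn {α : Type*} (G : SimpleGraph α) : ℕ :=
  sInf {k | ∃ S : Set (Sym2 α), S ⊆ G.edgeSet ∧ S.ncard = k ∧
    ¬ (G.deleteEdges S).Connected}

/-- `S` is a restricted edge-cut of `G`: deleting `S` disconnects `G` and every
component of `G - S` has at least two vertices. -/
def IsRestrictedEdgeCut {α : Type*} (G : SimpleGraph α) (S : Set (Sym2 α)) : Prop :=
  S ⊆ G.edgeSet ∧ ¬ (G.deleteEdges S).Connected ∧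
    ∀ v : α, 2 ≤ ((G.deleteEdges S).connectedComponentMk v).supp.ncard

/-- The restricted edge-connectivity `λ'(G)`. -/
noncomputable def restEdgeConn {α : Type*} (G : SimpleGraph α) : ℕ :=
  sInf {k | ∃ S : Set (Sym2 α), IsRestrictedEdgeCut G S ∧ S.ncard = k}

/-- `G` is super restricted edge-connected: every minimum restricted edge-cut
isolates an edge, i.e. some component of `G - S` has exactly two vertices. -/
def SuperRestrictedEdgeConnected {α : Type*} (G : SimpleGraph α) : Prop :=
  ∀ S : Set (Sym2 α), IsRestrictedEdgeCut G S → S.ncard = restEdgeConn G →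
    ∃ v : α, ((G.deleteEdges S).connectedComponentMk v).supp.ncard = 2

/-- The set `[X, Y]_G` of edges of `G` with one end in `X` and the other in `Y`. -/
def edgesBetween {α : Type*} (G : SimpleGraph α) (X Y : Set α) : Set (Sym2 α) :=
  {e | e ∈ G.edgeSet ∧ ∃ u ∈ X, ∃ v ∈ Y, e = s(u, v)}

/-!
Isolating an edge of minimum edge-degree gives `λ'(H) ≤ ξ(H)` for `H = G ⊠ Pₙ`, and a horizontal
edge in an end layer and a vertical edge show `ξ(H) ≤ min (2ξ(G) + 4) (5δ(G) + 1)`.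

Conversely, let `[X, Xᶜ]` be a restricted edge-cut of `H`. Each fiber `{v} × V(Pₙ)` is full
(inside `X` or inside `Xᶜ`) or broken, and cut edges are counted according to their projection
to `G`. Two adjacent broken fibers give `2ξ(G) + 4` cut edges. A broken fiber whose neighboring
fibers all lie on one side has two consecutive layers on the other side, since no vertex is
isolated on its side of the cut; this gives `5δ(G) + 1`. Otherwise both sides contain full fibers;
sending each broken fiber to the side holding fewer of its neighbors yields an edge cut `D` of `G`,
and every edge of `D` accounts for `3n - 2` cut edges of `H`, the number of edges between two
adjacent fibers.
-/

open SimpleGraph Finset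

section GraphFacts

variable {α : Type*} {K : SimpleGraph α}

lemma deg_eq_card_neighborFinset (K : SimpleGraph α) (v : α) [Fintype (K.neighborSet v)] :
    deg K v = #(K.neighborFinset v) := by
  rw [deg, Set.ncard_eq_toFinset_card', neighborFinset]

lemma minDeg_le_deg (K : SimpleGraph α) (v : α) : minDeg K ≤ deg K v :=
  Nat.sInf_le ⟨v, rfl⟩

lemma exists_minDeg_eq [Nonempty α] (K : SimpleGraph α) : ∃ v, minDeg K = deg K v :=
  Nat.sInf_mem (s := {d | ∃ v, d = deg K v}) ⟨_, Classical.arbitrary α, rfl⟩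

lemma minEdgeDeg_le {u v : α} (h : K.Adj u v) : minEdgeDeg K ≤ deg K u + deg K v - 2 :=
  Nat.sInf_le ⟨u, v, h, rfl⟩

lemma exists_minEdgeDeg_eq {u v : α} (h : K.Adj u v) :
    ∃ x y, K.Adj x y ∧ minEdgeDeg K = deg K x + deg K y - 2 :=
  Nat.sInf_mem (s := {d | ∃ u v, K.Adj u v ∧ d = deg K u + deg K v - 2}) ⟨_, u, v, h, rfl⟩

lemma SimpleGraph.Preconnected.one_le_deg [Finite α] [Nontrivial α] (hK : K.Preconnected)
    (v : α) : 1 ≤ deg K v := by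
  obtain ⟨u, hu⟩ := hK.exists_adj_of_nontrivial v
  exact (Set.ncard_pos (Set.toFinite _)).mpr ⟨u, hu⟩

lemma exists_adj_ne_of_three_le_deg [Finite α] {v : α} (h : 3 ≤ deg K v) (x y : α) :
    ∃ u, K.Adj v u ∧ u ≠ x ∧ u ≠ y := by
  by_contra! hsub
  have : deg K v ≤ ({x, y} : Set α).ncard :=
    Set.ncard_le_ncard (fun u hu => by
      by_cases hux : u = x
      · exact Or.inl hux
      · exact Or.inr (hsub u hu hux)) (Set.toFinite _)
  have := Set.ncard_insert_le x {y}
  simp only [Set.ncard_singleton] at this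
  omega

lemma ncard_incidenceSet_union_of_adj [Finite α] {x y : α} (h : K.Adj x y) :
    (K.incidenceSet x ∪ K.incidenceSet y).ncard + 1 = deg K x + deg K y := by
  classical
  have hx : (K.incidenceSet x).ncard = deg K x := by
    rw [deg, ← Nat.card_coe_set_eq, ← Nat.card_coe_set_eq]
    exact Nat.card_congr (K.incidenceSetEquivNeighborSet x)
  have hy : (K.incidenceSet y).ncard = deg K y := by
    rw [deg, ← Nat.card_coe_set_eq, ← Nat.card_coe_set_eq]
    exact Nat.card_congr (K.incidenceSetEquivNeighborSet y)
  have := Set.ncard_union_add_ncard_inter (K.incidenceSet x) (K.incidenceSet y)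
  rwa [K.incidenceSet_inter_incidenceSet_of_adj h, Set.ncard_singleton, hx, hy] at this

lemma SimpleGraph.Reachable.exists_adj_mem_not_mem {S : Set α} {a b : α} (h : K.Reachable a b)
    (ha : a ∈ S) (hb : b ∉ S) : ∃ x y, K.Adj x y ∧ x ∈ S ∧ y ∉ S := by
  obtain ⟨p⟩ := h
  obtain ⟨d, -, hd⟩ := p.exists_boundary_dart S ha hb
  exact ⟨_, _, d.adj, hd⟩

lemma two_le_ncard_supp_of_adj [Finite α] {a b : α} (h : K.Adj a b) :
    2 ≤ (K.connectedComponentMk a).supp.ncard := by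
  have hsub : ({a, b} : Set α) ⊆ (K.connectedComponentMk a).supp := by
    rintro c (rfl | rfl)
    · rfl
    · exact ConnectedComponent.eq.mpr h.reachable.symm
  exact (Set.ncard_pair h.ne).symm.le.trans (Set.ncard_le_ncard hsub (Set.toFinite _))

lemma edgesBetween_comm (K : SimpleGraph α) (X Y : Set α) :
    edgesBetween K X Y = edgesBetween K Y X := by
  ext e
  constructor <;> rintro ⟨he, u, hu, v, hv, rfl⟩ <;> exact ⟨he, v, hv, u, hu, Sym2.eq_swap⟩

lemma mk_mem_edgesBetween_compl {X : Set α} {a b : α} (h : K.Adj a b) (hab : a ∈ X ↔ b ∉ X) :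
    s(a, b) ∈ edgesBetween K X Xᶜ := by
  by_cases ha : a ∈ X
  · exact ⟨h, a, ha, b, hab.mp ha, rfl⟩
  · exact ⟨h, b, not_not.mp (mt hab.mpr ha), a, ha, Sym2.eq_swap⟩

lemma edgeConn_le_ncard_edgesBetween {L : Set α} (hL : L.Nonempty) (hLc : Lᶜ.Nonempty) :
    edgeConn K ≤ (edgesBetween K L Lᶜ).ncard := by
  refine Nat.sInf_le ⟨_, fun e he => he.1, rfl, fun hconn => ?_⟩
  obtain ⟨a, ha⟩ := hL
  obtain ⟨b, hb⟩ := hLc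
  obtain ⟨x, y, hxy, hx, hy⟩ := (hconn.preconnected a b).exists_adj_mem_not_mem ha hb
  rw [deleteEdges_adj] at hxy
  exact hxy.2 ⟨hxy.1, x, hx, y, hy, rfl⟩

lemma IsRestrictedEdgeCut.exists_separation [Nonempty α] {S : Set (Sym2 α)}
    (hS : IsRestrictedEdgeCut K S) :
    ∃ X : Set α, X.Nonempty ∧ Xᶜ.Nonempty ∧ (∀ a, ∃ b, K.Adj a b ∧ (a ∈ X ↔ b ∈ X)) ∧
      edgesBetween K X Xᶜ ⊆ S := by
  obtain ⟨-, hdis, hcomp⟩ := hS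
  obtain ⟨a₀⟩ := ‹Nonempty α›
  set K' := K.deleteEdges S
  have hmem (a : α) : a ∈ (K'.connectedComponentMk a₀).supp ↔ K'.Reachable a a₀ :=
    ConnectedComponent.eq
  have hside {a b : α} (h : K'.Adj a b) :
      a ∈ (K'.connectedComponentMk a₀).supp ↔ b ∈ (K'.connectedComponentMk a₀).supp := by
    rw [hmem, hmem]
    exact ⟨h.reachable.symm.trans, h.reachable.trans⟩
  refine ⟨(K'.connectedComponentMk a₀).supp, ⟨a₀, rfl⟩, ?_, fun a => ?_, ?_⟩
  · by_contra! hall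
    refine hdis ((connected_iff_exists_forall_reachable _).mpr ⟨a₀, fun w => ?_⟩)
    exact ((hmem w).mp (by simpa using Set.eq_empty_iff_forall_notMem.mp hall w)).symm
  · obtain ⟨b, hb, hba⟩ := Set.exists_ne_of_one_lt_ncard (hcomp a) a
    obtain ⟨p⟩ := (ConnectedComponent.eq.mp hb).symm
    have hadj := p.adj_snd (Walk.not_nil_of_ne hba.symm)
    exact ⟨_, (deleteEdges_adj.mp hadj).1, hside hadj⟩
  · rintro e ⟨he, x, hx, y, hy, rfl⟩
    by_contra heS
    exact hy ((hside (deleteEdges_adj.mpr ⟨he, heS⟩)).mp hx)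

/-- Cutting all edges at the two ends of `xy` other than `xy` itself isolates the edge. -/
lemma exists_isRestrictedEdgeCut_ncard_eq [Finite α] (hδ : ∀ v, 3 ≤ deg K v) {x y : α}
    (hxy : K.Adj x y) :
    ∃ S, IsRestrictedEdgeCut K S ∧ S.ncard = deg K x + deg K y - 2 := by
  set S := (K.incidenceSet x ∪ K.incidenceSet y) \ {s(x, y)}
  set K' := K.deleteEdges S
  have hstays {a b : α} (hab : K'.Adj a b) (ha : a ∈ ({x, y} : Set α)) :
      b ∈ ({x, y} : Set α) := by
    obtain ⟨hK, hnS⟩ := deleteEdges_adj.mp hab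
    have hin : s(a, b) ∈ K.incidenceSet x ∪ K.incidenceSet y := by
      rcases ha with rfl | rfl
      exacts [Or.inl ⟨hK, Sym2.mem_mk_left _ _⟩, Or.inr ⟨hK, Sym2.mem_mk_left _ _⟩]
    have : s(a, b) = s(x, y) := by
      by_contra hne
      exact hnS ⟨hin, hne⟩
    exact Sym2.mem_iff.mp (this ▸ Sym2.mem_mk_right a b)
  have hxy' : K'.Adj x y := deleteEdges_adj.mpr ⟨hxy, fun h => h.2 rfl⟩
  refine ⟨S, ⟨fun e he => ?_, fun hconn => ?_, fun w => ?_⟩, ?_⟩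
  · rcases he.1 with h | h
    exacts [K.incidenceSet_subset x h, K.incidenceSet_subset y h]
  · obtain ⟨z, -, hzx, hzy⟩ := exists_adj_ne_of_three_le_deg (hδ x) x y
    obtain ⟨a, b, hab, ha, hb⟩ :=
      (hconn.preconnected x z).exists_adj_mem_not_mem (S := {x, y}) (Or.inl rfl)
        (by simp [hzx, hzy])
    exact hb (hstays hab ha)
  · by_cases hw : w = x ∨ w = y
    · rcases hw with rfl | rfl
      exacts [two_le_ncard_supp_of_adj hxy', two_le_ncard_supp_of_adj hxy'.symm]
    · obtain ⟨u, hwu, hux, huy⟩ := exists_adj_ne_of_three_le_deg (hδ w) x y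
      refine two_le_ncard_supp_of_adj (b := u) (deleteEdges_adj.mpr ⟨hwu, fun h => ?_⟩)
      rcases h.1 with h | h <;> rcases Sym2.mem_iff.mp h.2 with h | h <;> simp_all
  · have := ncard_incidenceSet_union_of_adj hxy
    have hmem : s(x, y) ∈ K.incidenceSet x ∪ K.incidenceSet y :=
      Or.inl ⟨hxy, Sym2.mem_mk_left x y⟩
    rw [Set.ncard_sdiff_singleton_of_mem hmem]
    omega

lemma restEdgeConn_eq_minEdgeDeg [Finite α] [Nonempty α] (hδ : ∀ v, 3 ≤ deg K v)
    (h : ∀ S, IsRestrictedEdgeCut K S → minEdgeDeg K ≤ S.ncard) :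
    restEdgeConn K = minEdgeDeg K := by
  obtain ⟨v⟩ := ‹Nonempty α›
  obtain ⟨u, hvu, -⟩ := exists_adj_ne_of_three_le_deg (hδ v) v v
  obtain ⟨x, y, hxy, hmin⟩ := exists_minEdgeDeg_eq hvu
  obtain ⟨S, hS, hcard⟩ := exists_isRestrictedEdgeCut_ncard_eq hδ hxy
  refine le_antisymm (Nat.sInf_le ⟨S, hS, hcard.trans hmin.symm⟩) ?_
  exact le_csInf ⟨_, S, hS, rfl⟩ (by rintro k ⟨S', hS', rfl⟩; exact h S' hS')

end GraphFacts

section StrongProduct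

variable {α β : Type*} {G : SimpleGraph α} {P : SimpleGraph β}

lemma strongProd_adj_of_fst_ne {x y : α × β} (h : x.1 ≠ y.1) :
    (strongProd G P).Adj x y ↔ G.Adj x.1 y.1 ∧ (x.2 = y.2 ∨ P.Adj x.2 y.2) := by
  simp only [strongProd, h, false_and, false_or]
  tauto

lemma strongProd_adj_right {a : α} {i j : β} : (strongProd G P).Adj (a, i) (a, j) ↔ P.Adj i j := by
  simp [strongProd]

lemma neighborSet_strongProd (a : α) (i : β) :
    (strongProd G P).neighborSet (a, i) =
      (insert a (G.neighborSet a) ×ˢ insert i (P.neighborSet i)) \ {(a, i)} := by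
  ext ⟨b, j⟩
  simp only [mem_neighborSet, strongProd, Set.mem_sdiff, Set.mem_prod, Set.mem_insert_iff,
    Set.mem_singleton_iff, Prod.mk.injEq]
  constructor
  · rintro (⟨rfl, h⟩ | ⟨rfl, h⟩ | ⟨h, h'⟩)
    · exact ⟨⟨Or.inl rfl, Or.inr h⟩, fun hc => h.ne hc.2.symm⟩
    · exact ⟨⟨Or.inr h, Or.inl rfl⟩, fun hc => h.ne hc.1.symm⟩
    · exact ⟨⟨Or.inr h, Or.inr h'⟩, fun hc => h.ne hc.1.symm⟩
  · rintro ⟨⟨rfl | h, rfl | h'⟩, hne⟩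
    · exact absurd ⟨rfl, rfl⟩ hne
    · exact Or.inl ⟨rfl, h'⟩
    · exact Or.inr (Or.inl ⟨rfl, h⟩)
    · exact Or.inr (Or.inr ⟨h, h'⟩)

lemma deg_strongProd [Finite α] [Finite β] (a : α) (i : β) :
    deg (strongProd G P) (a, i) = (deg G a + 1) * (deg P i + 1) - 1 := by
  have hmem : (a, i) ∈ insert a (G.neighborSet a) ×ˢ insert i (P.neighborSet i) :=
    ⟨Set.mem_insert _ _, Set.mem_insert _ _⟩
  rw [deg, neighborSet_strongProd, Set.ncard_sdiff_singleton_of_mem hmem, Set.ncard_prod,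
    Set.ncard_insert_of_notMem (G.notMem_neighborSet_self (a := a)),
    Set.ncard_insert_of_notMem (P.notMem_neighborSet_self (a := i)), deg, deg]

end StrongProduct

section PathGraph

lemma deg_pathGraph_le_two {n : ℕ} (i : Fin n) : deg (pathGraph n) i ≤ 2 :=
  calc deg (pathGraph n) i = (Fin.val '' (pathGraph n).neighborSet i).ncard :=
        (Set.ncard_image_of_injective _ Fin.val_injective).symm
    _ ≤ ({i.val - 1, i.val + 1} : Set ℕ).ncard := by
        refine Set.ncard_le_ncard ?_ (Set.toFinite _)
        rintro _ ⟨j, hj, rfl⟩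
        rcases pathGraph_adj.mp hj with h | h
        · exact Or.inr h.symm
        · exact Or.inl (by omega)
    _ ≤ 2 := (Set.ncard_insert_le _ _).trans (by rw [Set.ncard_singleton])

lemma deg_pathGraph_zero {n : ℕ} (hn : 2 ≤ n) : deg (pathGraph n) ⟨0, by omega⟩ = 1 := by
  have : (pathGraph n).neighborSet ⟨0, by omega⟩ = {⟨1, hn⟩} := by
    ext j
    simp only [mem_neighborSet, pathGraph_adj, Set.mem_singleton_iff, Fin.ext_iff]
    omega
  rw [deg, this, Set.ncard_singleton]

end PathGraph

section ReflAdjPairs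

open scoped Classical

variable {β : Type*} [Fintype β] {P : SimpleGraph β}

/-- For `uv ∈ E(G)`, the edges of `G ⊠ P` between the fibers of `u` and `v` are the
`s((u, i), (v, j))` with `(i, j)` in this set. -/
noncomputable def reflAdjPairs (P : SimpleGraph β) : Finset (β × β) :=
  {p | p.1 = p.2 ∨ P.Adj p.1 p.2}

lemma card_reflAdjPairs_pathGraph (n : ℕ) : #(reflAdjPairs (pathGraph n)) = 3 * n - 2 := by
  cases n with
  | zero => simp [reflAdjPairs]
  | succ m =>
    have hsplit : reflAdjPairs (pathGraph (m + 1)) = univ.image (fun i => (i, i)) ∪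
        (univ.image (fun k : Fin m => (k.castSucc, k.succ)) ∪
          univ.image (fun k : Fin m => (k.succ, k.castSucc))) := by
      ext ⟨i, j⟩
      simp only [reflAdjPairs, mem_filter, mem_univ, true_and, mem_union, mem_image,
        Prod.mk.injEq, pathGraph_adj]
      constructor
      · rintro (rfl | h | h)
        · exact Or.inl ⟨i, rfl, rfl⟩
        · exact Or.inr (Or.inl ⟨⟨i, by omega⟩, Fin.ext rfl, Fin.ext h⟩)
        · exact Or.inr (Or.inr ⟨⟨j, by omega⟩, Fin.ext h, Fin.ext rfl⟩)
      · rintro (⟨k, rfl, rfl⟩ | ⟨k, rfl, rfl⟩ | ⟨k, rfl, rfl⟩)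
        · exact Or.inl rfl
        · exact Or.inr (Or.inl rfl)
        · exact Or.inr (Or.inr rfl)
    rw [hsplit, card_union_of_disjoint, card_union_of_disjoint,
      card_image_of_injective _ (fun i j h => (Prod.mk.inj h).1),
      card_image_of_injective _ (fun i j h => Fin.castSucc_injective _ (Prod.mk.inj h).1),
      card_image_of_injective _ (fun i j h => Fin.castSucc_injective _ (Prod.mk.inj h).2)]
    · simp only [card_univ, Fintype.card_fin]
      omega
    all_goals
      simp only [Finset.disjoint_left, mem_union, mem_image, mem_univ, true_and]
      rintro _ h h'
      grind [Fin.ext_iff, Fin.val_castSucc]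

lemma five_le_card_reflAdjPairs_filter (hP : P.Preconnected) {T : Set β} {a b c : β}
    (hab : P.Adj a b) (ha : a ∈ T) (hb : b ∈ T) (hc : c ∉ T) :
    5 ≤ #{p ∈ reflAdjPairs P | p.2 ∈ T} := by
  obtain ⟨x, y, hxy, hx, hy⟩ := (hP a c).exists_adj_mem_not_mem ha hc
  have hyx : (y, x) ∉ ({a, b} ×ˢ {a, b} : Finset (β × β)) := by
    intro h
    simp only [mem_product, mem_insert, mem_singleton] at h
    rcases h.1 with rfl | rfl
    exacts [hy ha, hy hb]
  have hsub :
      insert (y, x) ({a, b} ×ˢ {a, b} : Finset (β × β)) ⊆ {p ∈ reflAdjPairs P | p.2 ∈ T} := by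
    intro p hp
    simp only [mem_insert, mem_product, mem_singleton] at hp
    simp only [reflAdjPairs, mem_filter, mem_univ, true_and]
    rcases hp with rfl | ⟨h1 | h1, h2 | h2⟩ <;> simp_all [hxy.symm, hab.symm]
  calc 5 = #(insert (y, x) ({a, b} ×ˢ {a, b} : Finset (β × β))) := by
        rw [card_insert_of_notMem hyx, card_product, card_pair hab.ne]
    _ ≤ _ := card_le_card hsub

end ReflAdjPairs

section Fibers

variable {α β : Type*}

def fullFibers (X : Set (α × β)) : Set α := {v | ∀ i, (v, i) ∈ X}

def brokenFibers (X : Set (α × β)) : Set α := {v | (∃ i, (v, i) ∈ X) ∧ ∃ i, (v, i) ∉ X}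

variable {X : Set (α × β)}

lemma brokenFibers_compl : brokenFibers Xᶜ = brokenFibers X := by
  ext v
  simp only [brokenFibers, Set.mem_ofPred_eq, Set.mem_compl_iff, not_not]
  exact and_comm

lemma mem_fullFibers_or (v : α) :
    v ∈ fullFibers X ∨ v ∈ brokenFibers X ∨ v ∈ fullFibers Xᶜ := by
  simp only [fullFibers, brokenFibers, Set.mem_ofPred_eq, Set.mem_compl_iff]
  by_cases h : ∃ i, (v, i) ∉ X
  · by_cases h' : ∃ i, (v, i) ∈ X
    · exact Or.inr (Or.inl ⟨h', h⟩)
    · exact Or.inr (Or.inr (not_exists.mp h'))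
  · exact Or.inl (fun i => not_not.mp (not_exists.mp h i))

lemma disjoint_fullFibers_compl [Nonempty β] : Disjoint (fullFibers X) (fullFibers Xᶜ) :=
  Set.disjoint_left.mpr fun _ hA hC => hC (Classical.arbitrary β) (hA _)

lemma mem_brokenFibers_iff {v : α} : v ∈ brokenFibers X ↔ v ∉ fullFibers X ∪ fullFibers Xᶜ := by
  simp only [brokenFibers, fullFibers, Set.mem_union, Set.mem_ofPred_eq, Set.mem_compl_iff,
    not_or, not_forall, not_not]
  exact and_comm

lemma exists_adj_of_mem_brokenFibers {P : SimpleGraph β} (hP : P.Preconnected) {v : α}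
    (hv : v ∈ brokenFibers X) : ∃ i j, P.Adj i j ∧ (v, i) ∈ X ∧ (v, j) ∉ X := by
  obtain ⟨⟨i, hi⟩, j, hj⟩ := hv
  exact (hP i j).exists_adj_mem_not_mem (S := {t | (v, t) ∈ X}) hi hj

end Fibers

section CutEdgesOver

open scoped Classical

variable {α β : Type*} [Fintype α] [Fintype β] {G : SimpleGraph α} {P : SimpleGraph β}
  {X : Set (α × β)} {u v : α}

noncomputable def cutEdgesOver (G : SimpleGraph α) (P : SimpleGraph β) (X : Set (α × β))
    (k : Sym2 α) : Finset (Sym2 (α × β)) :=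
  {e ∈ (edgesBetween (strongProd G P) X Xᶜ).toFinset | e.map Prod.fst = k}

lemma mem_cutEdgesOver {e : Sym2 (α × β)} {k : Sym2 α} :
    e ∈ cutEdgesOver G P X k ↔
      e ∈ edgesBetween (strongProd G P) X Xᶜ ∧ e.map Prod.fst = k := by
  simp [cutEdgesOver]

lemma cutEdgesOver_compl (k : Sym2 α) : cutEdgesOver G P Xᶜ k = cutEdgesOver G P X k := by
  ext e
  rw [mem_cutEdgesOver, mem_cutEdgesOver, compl_compl, edgesBetween_comm]

lemma sum_card_cutEdgesOver_le (K : Finset (Sym2 α)) :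
    ∑ k ∈ K, #(cutEdgesOver G P X k) ≤ (edgesBetween (strongProd G P) X Xᶜ).ncard := by
  rw [Set.ncard_eq_toFinset_card']
  simp only [cutEdgesOver]
  rw [sum_card_fiberwise_eq_card_filter]
  exact card_filter_le _ _

lemma one_le_card_cutEdgesOver_diag (hP : P.Preconnected) (hv : v ∈ brokenFibers X) :
    1 ≤ #(cutEdgesOver G P X s(v, v)) := by
  obtain ⟨i, j, hij, hi, hj⟩ := exists_adj_of_mem_brokenFibers hP hv
  exact card_pos.mpr ⟨_, mem_cutEdgesOver.mpr ⟨⟨Or.inl ⟨rfl, hij⟩, _, hi, _, hj, rfl⟩, rfl⟩⟩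

lemma exists_mk_mem_cutEdgesOver (huv : G.Adj u v) {i j l : β} (hij : P.Adj i j)
    (hi : (v, i) ∈ X) (hj : (v, j) ∉ X) (hl : l = i ∨ l = j) :
    ∃ t, s((u, l), (v, t)) ∈ cutEdgesOver G P X s(u, v) := by
  have hadj {t : β} (ht : t = i ∨ t = j) : (strongProd G P).Adj (u, l) (v, t) := by
    refine (strongProd_adj_of_fst_ne huv.ne).mpr ⟨huv, ?_⟩
    rcases hl with rfl | rfl <;> rcases ht with rfl | rfl <;> simp [hij, hij.symm]
  by_cases hul : (u, l) ∈ X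
  · exact ⟨j, mem_cutEdgesOver.mpr
      ⟨mk_mem_edgesBetween_compl (hadj (Or.inr rfl)) (iff_of_true hul hj), rfl⟩⟩
  · exact ⟨i, mem_cutEdgesOver.mpr
      ⟨mk_mem_edgesBetween_compl (hadj (Or.inl rfl)) (iff_of_false hul (not_not.mpr hi)), rfl⟩⟩

lemma two_le_card_cutEdgesOver (hP : P.Preconnected) (huv : G.Adj u v)
    (hv : v ∈ brokenFibers X) : 2 ≤ #(cutEdgesOver G P X s(u, v)) := by
  obtain ⟨i, j, hij, hi, hj⟩ := exists_adj_of_mem_brokenFibers hP hv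
  obtain ⟨t, ht⟩ := exists_mk_mem_cutEdgesOver huv hij hi hj (Or.inl rfl)
  obtain ⟨t', ht'⟩ := exists_mk_mem_cutEdgesOver huv hij hi hj (Or.inr rfl)
  refine one_lt_card.mpr ⟨_, ht, _, ht', fun h => ?_⟩
  rcases Sym2.eq_iff.mp h with ⟨h1, -⟩ | ⟨h1, -⟩
  exacts [hij.ne (Prod.ext_iff.mp h1).2, huv.ne (Prod.ext_iff.mp h1).1]

lemma card_filter_reflAdjPairs_le_card_cutEdgesOver (huv : G.Adj u v) (hu : u ∈ fullFibers X) :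
    #{p ∈ reflAdjPairs P | (v, p.2) ∉ X} ≤ #(cutEdgesOver G P X s(u, v)) := by
  refine card_le_card_of_injOn (fun p => s((u, p.1), (v, p.2))) (fun p hp => ?_)
    (fun p _ q _ h => ?_)
  · obtain ⟨hp, hv⟩ := mem_filter.mp hp
    have hadj : (strongProd G P).Adj (u, p.1) (v, p.2) :=
      (strongProd_adj_of_fst_ne huv.ne).mpr ⟨huv, by simpa [reflAdjPairs] using hp⟩
    exact mem_cutEdgesOver.mpr ⟨⟨hadj, _, hu p.1, _, hv, rfl⟩, rfl⟩
  · rcases Sym2.eq_iff.mp h with ⟨h1, h2⟩ | ⟨h1, -⟩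
    · exact Prod.ext (Prod.ext_iff.mp h1).2 (Prod.ext_iff.mp h2).2
    · exact absurd (Prod.ext_iff.mp h1).1 huv.ne

lemma card_filter_reflAdjPairs_le_card_cutEdgesOver_of_compl (huv : G.Adj u v)
    (hu : u ∈ fullFibers Xᶜ) :
    #{p ∈ reflAdjPairs P | (v, p.2) ∈ X} ≤ #(cutEdgesOver G P X s(u, v)) := by
  simpa [cutEdgesOver_compl] using card_filter_reflAdjPairs_le_card_cutEdgesOver (X := Xᶜ) huv hu

end CutEdgesOver

section Incidence

open scoped Classical

variable {α : Type*} [Fintype α] {G : SimpleGraph α}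

lemma exists_eq_mk_of_mem_incidenceFinset {e : Sym2 α} {v : α} (he : e ∈ G.incidenceFinset v) :
    ∃ u, G.Adj u v ∧ e = s(u, v) := by
  induction e using Sym2.ind with | h a b => ?_
  rw [mem_incidenceFinset, mk'_mem_incidenceSet_iff] at he
  rcases he with ⟨hab, rfl | rfl⟩
  exacts [⟨b, hab.symm, Sym2.eq_swap⟩, ⟨a, hab, rfl⟩]

lemma sum_incidenceFinset_eq_sum_neighborFinset {M : Type*} [AddCommMonoid M] (v : α)
    (f : Sym2 α → M) : ∑ e ∈ G.incidenceFinset v, f e = ∑ u ∈ G.neighborFinset v, f s(u, v) := by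
  have : G.incidenceFinset v = (G.neighborFinset v).image (s(·, v)) := by
    ext e
    simp only [mem_image, mem_neighborFinset]
    constructor
    · intro he
      obtain ⟨u, hu, rfl⟩ := exists_eq_mk_of_mem_incidenceFinset he
      exact ⟨u, hu.symm, rfl⟩
    · rintro ⟨u, hu, rfl⟩
      rw [mem_incidenceFinset, Sym2.eq_swap, mem_incidenceSet]
      exact hu
  rw [this, sum_image fun _ _ _ _ h => Sym2.congr_left.mp h]

lemma mk_notMem_incidenceFinset (x v : α) : s(x, x) ∉ G.incidenceFinset v := by
  simp [mk'_mem_incidenceSet_iff]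

end Incidence

section Cases

open scoped Classical

variable {α β : Type*} [Fintype α] [Fintype β] {G : SimpleGraph α} {P : SimpleGraph β}
  {X : Set (α × β)}

lemma two_mul_minEdgeDeg_add_four_le (hP : P.Preconnected) {v v' : α} (hvv' : G.Adj v v')
    (hv : v ∈ brokenFibers X) (hv' : v' ∈ brokenFibers X) :
    2 * minEdgeDeg G + 4 ≤ (edgesBetween (strongProd G P) X Xᶜ).ncard := by
  set E := G.incidenceFinset v ∪ G.incidenceFinset v'
  have hdiag (x : α) : s(x, x) ∉ E := by
    simp only [E, mem_union, not_or]
    exact ⟨mk_notMem_incidenceFinset x v, mk_notMem_incidenceFinset x v'⟩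
  have hcardE : #E + 1 = deg G v + deg G v' := by
    rw [← ncard_incidenceSet_union_of_adj hvv', ← Set.ncard_coe_finset]
    simp [E]
  have hE : ∀ e ∈ E, 2 ≤ #(cutEdgesOver G P X e) := by
    intro e he
    rcases mem_union.mp he with he | he <;>
      obtain ⟨u, hu, rfl⟩ := exists_eq_mk_of_mem_incidenceFinset he
    exacts [two_le_card_cutEdgesOver hP hu hv, two_le_card_cutEdgesOver hP hu hv']
  have hvv : s(v, v) ∉ insert s(v', v') E := by
    rw [mem_insert, not_or]
    exact ⟨fun h => hvv'.ne (by simpa using h), hdiag v⟩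
  have hpos : 1 ≤ #E := card_pos.mpr ⟨s(v, v'), mem_union_left _
    ((mem_incidenceFinset _ _ _).mpr ((mem_incidenceSet _ _ _).mpr hvv'))⟩
  calc 2 * minEdgeDeg G + 4 ≤ 1 + (1 + #E * 2) := by
        have := minEdgeDeg_le hvv'
        omega
    _ ≤ #(cutEdgesOver G P X s(v, v)) +
          (#(cutEdgesOver G P X s(v', v')) + ∑ e ∈ E, #(cutEdgesOver G P X e)) :=
        add_le_add (one_le_card_cutEdgesOver_diag hP hv)
          (add_le_add (one_le_card_cutEdgesOver_diag hP hv')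
            (by simpa using card_nsmul_le_sum E _ 2 hE))
    _ = ∑ k ∈ insert s(v, v) (insert s(v', v') E), #(cutEdgesOver G P X k) := by
        rw [sum_insert hvv, sum_insert (hdiag v')]
    _ ≤ _ := sum_card_cutEdgesOver_le _

lemma five_mul_minDeg_add_one_le (hP : P.Preconnected) {v : α} (hv : v ∈ brokenFibers X)
    (hnbr : ∀ u, G.Adj v u → u ∈ fullFibers X)
    (hside : ∀ a, ∃ b, (strongProd G P).Adj a b ∧ (a ∈ X ↔ b ∈ X)) :
    5 * minDeg G + 1 ≤ (edgesBetween (strongProd G P) X Xᶜ).ncard := by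
  obtain ⟨⟨c, hc⟩, i, hi⟩ := hv
  obtain ⟨⟨w, j⟩, hadj, hij⟩ := hside (v, i)
  obtain rfl : v = w := by
    by_contra hvw
    exact hi (hij.mpr (hnbr w ((strongProd_adj_of_fst_ne hvw).mp hadj).1 j))
  have hj : (v, j) ∉ X := fun h => hi (hij.mpr h)
  have h5 : 5 ≤ #{p ∈ reflAdjPairs P | (v, p.2) ∉ X} := by
    convert five_le_card_reflAdjPairs_filter hP (T := {t | (v, t) ∉ X})
      (strongProd_adj_right.mp hadj) hi hj (not_not.mpr hc) using 3
    rfl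
  have hN : ∀ u ∈ G.neighborFinset v, 5 ≤ #(cutEdgesOver G P X s(u, v)) := fun u hu =>
    have hvu := (mem_neighborFinset _ _ _).mp hu
    h5.trans (card_filter_reflAdjPairs_le_card_cutEdgesOver hvu.symm (hnbr u hvu))
  calc 5 * minDeg G + 1 ≤ #(G.neighborFinset v) * 5 + 1 := by
        have := minDeg_le_deg G v
        rw [deg_eq_card_neighborFinset] at this
        omega
    _ ≤ ∑ u ∈ G.neighborFinset v, #(cutEdgesOver G P X s(u, v)) +
          #(cutEdgesOver G P X s(v, v)) :=
        add_le_add (by simpa using card_nsmul_le_sum _ _ 5 hN)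
          (one_le_card_cutEdgesOver_diag hP ⟨⟨c, hc⟩, i, hi⟩)
    _ = ∑ k ∈ insert s(v, v) (G.incidenceFinset v), #(cutEdgesOver G P X k) := by
        rw [sum_insert (mk_notMem_incidenceFinset v v), sum_incidenceFinset_eq_sum_neighborFinset,
          add_comm]
    _ ≤ _ := sum_card_cutEdgesOver_le _

lemma five_mul_minDeg_add_one_le_of_fullFibers_compl_eq_empty (hP : P.Preconnected)
    (hind : ∀ v ∈ brokenFibers X, ∀ w ∈ brokenFibers X, ¬ G.Adj v w) (hXc : Xᶜ.Nonempty)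
    (hC : fullFibers Xᶜ = ∅) (hside : ∀ a, ∃ b, (strongProd G P).Adj a b ∧ (a ∈ X ↔ b ∈ X)) :
    5 * minDeg G + 1 ≤ (edgesBetween (strongProd G P) X Xᶜ).ncard := by
  obtain ⟨⟨v, i⟩, hi⟩ := hXc
  have hv : v ∈ brokenFibers X := by
    obtain ⟨j, hj⟩ : ∃ j, (v, j) ∈ X := by
      by_contra! h
      exact Set.eq_empty_iff_forall_notMem.mp hC v h
    exact ⟨⟨j, hj⟩, i, hi⟩
  refine five_mul_minDeg_add_one_le hP hv (fun u hu => ?_) hside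
  rcases mem_fullFibers_or (X := X) u with h | h | h
  exacts [h, absurd hu (hind v hv u h), (Set.eq_empty_iff_forall_notMem.mp hC u h).elim]

end Cases

section EdgeConn

open scoped Classical

variable {α : Type*} [Fintype α] {G : SimpleGraph α}

lemma card_filter_mem_edgesBetween_le {L C : Set α} {v : α} (hv : v ∈ L)
    (hnbr : ∀ u, G.Adj v u → u ∉ L → u ∈ C) :
    #{e ∈ (edgesBetween G L Lᶜ).toFinset | v ∈ e} ≤ #{u ∈ G.neighborFinset v | u ∈ C} := by
  refine (card_le_card (t := {u ∈ G.neighborFinset v | u ∈ C}.image (s(v, ·))) fun e he => ?_).trans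
    card_image_le
  obtain ⟨he, hve⟩ := mem_filter.mp he
  obtain ⟨hadj, x, hx, y, hy, rfl⟩ := Set.mem_toFinset.mp he
  rcases Sym2.mem_iff.mp hve with rfl | rfl
  · refine mem_image.mpr ⟨y, mem_filter.mpr ⟨?_, hnbr y hadj hy⟩, rfl⟩
    exact (mem_neighborFinset _ _ _).mpr hadj
  · exact absurd hv hy

/-- Put each vertex outside `A ∪ C` on the side of `A` or of `C` that contains fewer of its
neighbors; the resulting cut bounds `λ(G)`. -/
lemma edgeConn_le_ncard_edgesBetween_add_sum {A C : Set α} (hA : A.Nonempty) (hC : C.Nonempty)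
    (hAC : Disjoint A C) (hind : ∀ v w, v ∉ A ∪ C → w ∉ A ∪ C → ¬ G.Adj v w) :
    edgeConn G ≤ (edgesBetween G A C).ncard + ∑ v ∈ {v | v ∉ A ∪ C},
      min #{u ∈ G.neighborFinset v | u ∈ A} #{u ∈ G.neighborFinset v | u ∈ C} := by
  set nA := fun v => #{u ∈ G.neighborFinset v | u ∈ A}
  set nC := fun v => #{u ∈ G.neighborFinset v | u ∈ C}
  set L : Set α := A ∪ {v | v ∉ A ∪ C ∧ nC v ≤ nA v}
  set D := (edgesBetween G L Lᶜ).toFinset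
  have hCL : ∀ c ∈ C, c ∉ L := by
    rintro c hc (h | h)
    exacts [hAC.ne_of_mem h hc rfl, h.1 (Or.inr hc)]
  have hLA : ∀ x ∈ L, x ∈ A ∪ C → x ∈ A := by
    rintro x (h | h) hx
    exacts [h, absurd hx h.1]
  have hcut : edgeConn G ≤ #D := by
    rw [← Set.ncard_eq_toFinset_card']
    obtain ⟨c, hc⟩ := hC
    exact edgeConn_le_ncard_edgesBetween (hA.mono Set.subset_union_left) ⟨c, hCL c hc⟩
  have hsplit : D ⊆ (edgesBetween G A C).toFinset ∪
      ({v | v ∉ A ∪ C} : Finset α).biUnion (fun v => {e ∈ D | v ∈ e}) := by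
    intro e he
    obtain ⟨hadj, x, hx, y, hy, rfl⟩ := Set.mem_toFinset.mp he
    simp only [mem_union, mem_biUnion, mem_filter, mem_univ, true_and, Set.mem_toFinset]
    by_cases hxB : x ∉ A ∪ C
    · exact Or.inr ⟨x, hxB, he, Sym2.mem_mk_left x y⟩
    by_cases hyB : y ∉ A ∪ C
    · exact Or.inr ⟨y, hyB, he, Sym2.mem_mk_right x y⟩
    have hyC : y ∈ C := (not_not.mp hyB).resolve_left fun h => hy (Or.inl h)
    exact Or.inl ⟨hadj, x, hLA x hx (not_not.mp hxB), y, hyC, rfl⟩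
  have hlocal : ∀ v ∈ ({v | v ∉ A ∪ C} : Finset α), #{e ∈ D | v ∈ e} ≤ min (nA v) (nC v) := by
    intro v hv
    replace hv : v ∉ A ∪ C := by simpa using hv
    have hnbr {u : α} (hu : G.Adj v u) : u ∈ A ∪ C := by
      by_contra h
      exact hind v u hv h hu
    by_cases hvL : v ∈ L
    · rw [min_eq_right (hvL.resolve_left fun h => hv (Or.inl h)).2]
      exact card_filter_mem_edgesBetween_le hvL fun u hu huL =>
        (hnbr hu).resolve_left fun h => huL (Or.inl h)
    · rw [min_eq_left (le_of_lt (not_le.mp fun h => hvL (Or.inr ⟨hv, h⟩)))]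
      have := card_filter_mem_edgesBetween_le (L := Lᶜ) (C := A) hvL fun u hu huL =>
        hLA u (not_not.mp huL) (hnbr hu)
      rwa [compl_compl, ← edgesBetween_comm] at this
  calc edgeConn G ≤ #D := hcut
    _ ≤ #(edgesBetween G A C).toFinset + ∑ v ∈ ({v | v ∉ A ∪ C} : Finset α), #{e ∈ D | v ∈ e} :=
        (card_le_card hsplit).trans ((card_union_le _ _).trans (add_le_add le_rfl card_biUnion_le))
    _ ≤ _ := by
        rw [← Set.ncard_eq_toFinset_card']
        exact add_le_add le_rfl (sum_le_sum hlocal)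

end EdgeConn

section CutCount

open scoped Classical

variable {α β : Type*} [Fintype α] [Fintype β] {G : SimpleGraph α} {P : SimpleGraph β}
  {X : Set (α × β)}

lemma card_reflAdjPairs_le_card_cutEdgesOver {e : Sym2 α}
    (he : e ∈ edgesBetween G (fullFibers X) (fullFibers Xᶜ)) :
    #(reflAdjPairs P) ≤ #(cutEdgesOver G P X e) := by
  obtain ⟨hadj, a, ha, c, hc, rfl⟩ := he
  have := card_filter_reflAdjPairs_le_card_cutEdgesOver (P := P) hadj ha
  rwa [filter_true_of_mem fun p _ => hc p.2] at this

lemma card_reflAdjPairs_mul_min_le_sum [Nonempty β] (v : α) :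
    #(reflAdjPairs P) * min #{u ∈ G.neighborFinset v | u ∈ fullFibers X}
      #{u ∈ G.neighborFinset v | u ∈ fullFibers Xᶜ} ≤
    ∑ e ∈ G.incidenceFinset v, #(cutEdgesOver G P X e) := by
  set Av := {u ∈ G.neighborFinset v | u ∈ fullFibers X}
  set Cv := {u ∈ G.neighborFinset v | u ∈ fullFibers Xᶜ}
  set nY := #{p ∈ reflAdjPairs P | (v, p.2) ∉ X}
  set nX := #{p ∈ reflAdjPairs P | (v, p.2) ∈ X}
  have hAv : ∀ u ∈ Av, nY ≤ #(cutEdgesOver G P X s(u, v)) :=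
    fun u hu => card_filter_reflAdjPairs_le_card_cutEdgesOver
      ((mem_neighborFinset _ _ _).mp (mem_filter.mp hu).1).symm (mem_filter.mp hu).2
  have hCv : ∀ u ∈ Cv, nX ≤ #(cutEdgesOver G P X s(u, v)) :=
    fun u hu => card_filter_reflAdjPairs_le_card_cutEdgesOver_of_compl
      ((mem_neighborFinset _ _ _).mp (mem_filter.mp hu).1).symm (mem_filter.mp hu).2
  have hR : nX + nY = #(reflAdjPairs P) := card_filter_add_card_filter_not _
  have hdisj : Disjoint Av Cv := disjoint_filter.mpr fun _ _ hu =>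
    Set.disjoint_left.mp (disjoint_fullFibers_compl (X := X)) hu
  calc #(reflAdjPairs P) * min #Av #Cv = min #Av #Cv * nY + min #Av #Cv * nX := by
        rw [← hR]
        ring
    _ ≤ #Av * nY + #Cv * nX :=
        add_le_add (Nat.mul_le_mul_right _ (min_le_left _ _))
          (Nat.mul_le_mul_right _ (min_le_right _ _))
    _ ≤ ∑ u ∈ Av, #(cutEdgesOver G P X s(u, v)) + ∑ u ∈ Cv, #(cutEdgesOver G P X s(u, v)) :=
        add_le_add (by simpa using card_nsmul_le_sum _ _ _ hAv)
          (by simpa using card_nsmul_le_sum _ _ _ hCv)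
    _ ≤ ∑ e ∈ G.incidenceFinset v, #(cutEdgesOver G P X e) := by
        rw [sum_incidenceFinset_eq_sum_neighborFinset, ← sum_union hdisj]
        exact sum_le_sum_of_subset (union_subset (filter_subset _ _) (filter_subset _ _))

/-- Cut edges are counted over the edges of `G` between full fibers of opposite sides and over the
edges at broken fibers; nothing is counted twice since no two broken fibers are adjacent. -/
lemma card_reflAdjPairs_mul_le_ncard [Nonempty β]
    (hind : ∀ v ∈ brokenFibers X, ∀ w ∈ brokenFibers X, ¬ G.Adj v w) :
    #(reflAdjPairs P) * ((edgesBetween G (fullFibers X) (fullFibers Xᶜ)).ncard +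
      ∑ v ∈ {v | v ∉ fullFibers X ∪ fullFibers Xᶜ},
        min #{u ∈ G.neighborFinset v | u ∈ fullFibers X}
          #{u ∈ G.neighborFinset v | u ∈ fullFibers Xᶜ}) ≤
    (edgesBetween (strongProd G P) X Xᶜ).ncard := by
  set A := fullFibers X
  set C := fullFibers Xᶜ
  set B : Finset α := {v | v ∉ A ∪ C}
  set EAC := (edgesBetween G A C).toFinset
  have hdisjAC : Disjoint EAC (B.biUnion fun v => G.incidenceFinset v) := by
    refine Finset.disjoint_left.mpr fun e he heB => ?_
    obtain ⟨-, a, ha, c, hc, rfl⟩ := Set.mem_toFinset.mp he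
    obtain ⟨v, hv, hve⟩ := mem_biUnion.mp heB
    have hv' : v ∉ A ∪ C := by simpa [B] using hv
    rw [mem_incidenceFinset, mk'_mem_incidenceSet_iff] at hve
    rcases hve.2 with rfl | rfl
    exacts [hv' (Or.inl ha), hv' (Or.inr hc)]
  have hdisjB : (B : Set α).PairwiseDisjoint fun v => G.incidenceFinset v := by
    intro v hv v' hv' hne
    rw [Function.onFun, ← disjoint_coe, coe_incidenceFinset, coe_incidenceFinset,
      Set.disjoint_iff_inter_eq_empty]
    refine G.incidenceSet_inter_incidenceSet_of_not_adj (hind v ?_ v' ?_) hne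
    exacts [mem_brokenFibers_iff.mpr (by simpa [B] using hv),
      mem_brokenFibers_iff.mpr (by simpa [B] using hv')]
  calc #(reflAdjPairs P) * ((edgesBetween G A C).ncard + ∑ v ∈ B,
        min #{u ∈ G.neighborFinset v | u ∈ A} #{u ∈ G.neighborFinset v | u ∈ C})
      = #(reflAdjPairs P) * #EAC + ∑ v ∈ B, #(reflAdjPairs P) *
          min #{u ∈ G.neighborFinset v | u ∈ A} #{u ∈ G.neighborFinset v | u ∈ C} := by
        rw [mul_add, mul_sum, Set.ncard_eq_toFinset_card']
    _ ≤ ∑ e ∈ EAC, #(cutEdgesOver G P X e) +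
          ∑ v ∈ B, ∑ e ∈ G.incidenceFinset v, #(cutEdgesOver G P X e) := by
        refine add_le_add ?_ (sum_le_sum fun v _ => card_reflAdjPairs_mul_min_le_sum v)
        simpa [mul_comm] using card_nsmul_le_sum EAC _ _ fun e he =>
          card_reflAdjPairs_le_card_cutEdgesOver (P := P) (Set.mem_toFinset.mp he)
    _ = ∑ k ∈ EAC ∪ B.biUnion fun v => G.incidenceFinset v, #(cutEdgesOver G P X k) := by
        rw [sum_union hdisjAC, sum_biUnion hdisjB]
    _ ≤ _ := sum_card_cutEdgesOver_le _

theorem min_le_ncard_edgesBetween_strongProd (hP : P.Preconnected) (hX : X.Nonempty)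
    (hXc : Xᶜ.Nonempty) (hside : ∀ a, ∃ b, (strongProd G P).Adj a b ∧ (a ∈ X ↔ b ∈ X)) :
    min (min (2 * minEdgeDeg G + 4) (5 * minDeg G + 1)) (#(reflAdjPairs P) * edgeConn G) ≤
      (edgesBetween (strongProd G P) X Xᶜ).ncard := by
  have : Nonempty β := ⟨hX.some.2⟩
  by_cases hI : ∃ v ∈ brokenFibers X, ∃ w ∈ brokenFibers X, G.Adj v w
  · obtain ⟨v, hv, w, hw, hvw⟩ := hI
    exact (min_le_left _ _).trans
      ((min_le_left _ _).trans (two_mul_minEdgeDeg_add_four_le hP hvw hv hw))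
  simp only [not_exists, not_and] at hI
  rcases (fullFibers Xᶜ).eq_empty_or_nonempty with hC | hC
  · exact (min_le_left _ _).trans ((min_le_right _ _).trans
      (five_mul_minDeg_add_one_le_of_fullFibers_compl_eq_empty hP hI hXc hC hside))
  rcases (fullFibers X).eq_empty_or_nonempty with hA | hA
  · refine (min_le_left _ _).trans ((min_le_right _ _).trans ?_)
    have := five_mul_minDeg_add_one_le_of_fullFibers_compl_eq_empty (X := Xᶜ) hP
      (by simpa only [brokenFibers_compl] using hI) (by rwa [compl_compl])
      (by rwa [compl_compl]) (fun a => (hside a).imp fun b hb => ⟨hb.1, not_congr hb.2⟩)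
    rwa [compl_compl, edgesBetween_comm] at this
  refine (min_le_right _ _).trans ((Nat.mul_le_mul_left _ ?_).trans
    (card_reflAdjPairs_mul_le_ncard hI))
  exact edgeConn_le_ncard_edgesBetween_add_sum hA hC disjoint_fullFibers_compl
    fun v w hv hw => hI v (mem_brokenFibers_iff.mpr hv) w (mem_brokenFibers_iff.mpr hw)

end CutCount

section StrongProdPathGraph

variable {α : Type*} [Fintype α] [Nontrivial α] {G : SimpleGraph α} {n : ℕ}

lemma three_le_deg_strongProd_pathGraph (hG : G.Preconnected) (hn : 2 ≤ n) (x : α × Fin n) :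
    3 ≤ deg (strongProd G (pathGraph n)) x := by
  have : Nontrivial (Fin n) := Fin.nontrivial_iff_two_le.mpr hn
  obtain ⟨a, i⟩ := x
  have := hG.one_le_deg a
  have := (pathGraph_preconnected n).one_le_deg i
  have : 2 * 2 ≤ (deg G a + 1) * (deg (pathGraph n) i + 1) := Nat.mul_le_mul (by omega) (by omega)
  rw [deg_strongProd]
  omega

/-- Witnessed by a horizontal edge in the end layer `0` and by a vertical edge `(v, 0)(v, 1)`. -/
lemma minEdgeDeg_strongProd_pathGraph_le (hG : G.Preconnected) (hn : 2 ≤ n) :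
    minEdgeDeg (strongProd G (pathGraph n)) ≤ min (2 * minEdgeDeg G + 4) (5 * minDeg G + 1) := by
  have h0 := deg_pathGraph_zero hn
  refine le_min ?_ ?_
  · obtain ⟨b, hab⟩ := hG.exists_adj_of_nontrivial (Classical.arbitrary α)
    obtain ⟨u, w, huw, hmin⟩ := exists_minEdgeDeg_eq hab
    have := minEdgeDeg_le (K := strongProd G (pathGraph n)) (u := (u, ⟨0, by omega⟩))
      (v := (w, ⟨0, by omega⟩)) (Or.inr (Or.inl ⟨rfl, huw⟩))
    rw [deg_strongProd, deg_strongProd, h0] at this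
    have := hG.one_le_deg u
    have := hG.one_le_deg w
    omega
  · obtain ⟨v, hv⟩ := exists_minDeg_eq G
    have := minEdgeDeg_le (K := strongProd G (pathGraph n)) (u := (v, ⟨0, by omega⟩))
      (v := (v, ⟨1, hn⟩)) (strongProd_adj_right.mpr (pathGraph_adj.mpr (Or.inl rfl)))
    rw [deg_strongProd, deg_strongProd, h0] at this
    have : (deg G v + 1) * (deg (pathGraph n) ⟨1, hn⟩ + 1) ≤ (deg G v + 1) * 3 :=
      Nat.mul_le_mul_left _ (by have := deg_pathGraph_le_two (⟨1, hn⟩ : Fin n); omega)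
    omega

end StrongProdPathGraph

theorem maximallyRestricted_strongProd_pathGraph {V : Type*} [Fintype V]
    (G : SimpleGraph V) (m n : ℕ) (hm : Fintype.card V = m) (hnt : 2 ≤ m)
    (hG : G.Connected) (hn : 2 ≤ n)
    (h : min (2 * minEdgeDeg G + 4) (5 * minDeg G + 1) ≤
      min ((3 * n - 2) * edgeConn G) (m + 2 * numEdges G)) :
    restEdgeConn (strongProd G (SimpleGraph.pathGraph n)) =
      minEdgeDeg (strongProd G (SimpleGraph.pathGraph n)) := by
  have : Nontrivial V := Fintype.one_lt_card_iff_nontrivial.mp (by omega)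
  have : Nonempty (V × Fin n) := ⟨(Classical.arbitrary V, ⟨0, by omega⟩)⟩
  refine restEdgeConn_eq_minEdgeDeg (three_le_deg_strongProd_pathGraph hG.preconnected hn)
    fun S hS => ?_
  obtain ⟨X, hX, hXc, hside, hXS⟩ := hS.exists_separation
  have hcut := min_le_ncard_edgesBetween_strongProd (pathGraph_preconnected n) hX hXc hside
  rw [card_reflAdjPairs_pathGraph, min_eq_left (h.trans (min_le_left _ _))] at hcut
  exact (minEdgeDeg_strongProd_pathGraph_le hG.preconnected hn).trans
    (hcut.trans (Set.ncard_le_ncard hXS))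
end

section
/- Let G be a connected nontrivial simple graph with m vertices and let n ≥ 4. If min{n²·λ(G), (n−1)·(m + 2·e(G))} ≥ 2n·δ(G) + 2n − 4, then the strong product G ⊠ K_n is maximally restricted edge-connected, i.e., λ′(G ⊠ K_n) = ξ(G ⊠ K_n). -/
/-!
Let `S` be a restricted edge-cut of `G ⊠ K_n` and `X` the vertex set of a component of the graph
with `S` deleted, so that every edge between `X` and its complement lies in `S`. If `a v` and
`b v` count the vertices of the clique `{v} × K_n` inside and outside `X`, these edges number
`∑ v, a v * b v + ∑ vw ∈ E(G), (a v * b w + a w * b v)`. Call `v` split if `a v` and `b v` are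
both positive. Neither side of a restricted edge-cut has isolated vertices, so a split `v` with
`a v = 1` has a neighbour `w` with `a w > 0`, and likewise for `b`.

* If no vertex is split, `X` is a union of cliques over a nontrivial edge-cut of `G`, each edge of
  which contributes `n²`: at least `n²λ(G) ≥ 2nδ + 2n - 4` edges.
* A split `v` with `a v, b v ≥ 2`, or two adjacent split vertices, already contribute
  `2nδ + 2n - 4` edges at their cliques.
* Otherwise `a v = 1` or `b v = 1` at every split `v`, and no neighbour of `v` is split. Moving
  every clique to its majority side gives a nontrivial edge-cut of `G` whose edges contribute at
  least `n(n - 1)` each; with the edges at one split clique this makes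
  `n(n - 2)λ(G) + nδ(G) + n - 1 ≥ 2nδ + 2n - 4`.

The bound is attained by deleting, for an edge inside the clique over a vertex of minimum degree,
all other edges at its two ends.
-/

open Finset SimpleGraph

section Degrees

variable {V : Type*} (G : SimpleGraph V)

theorem strongProd_completeGraph_adj {n : ℕ} {x y : V × Fin n} :
    (strongProd G (completeGraph (Fin n))).Adj x y ↔ (x.1 = y.1 ∧ x.2 ≠ y.2) ∨ G.Adj x.1 y.1 := by
  simp only [strongProd, completeGraph, top_adj]
  tauto

theorem deg_eq_degree (v : V) [Fintype (G.neighborSet v)] : deg G v = G.degree v := by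
  rw [deg, Set.ncard_eq_toFinset_card', Set.toFinset_card, card_neighborSet_eq_degree]

theorem minDeg_le_deg_s7 (v : V) : minDeg G ≤ deg G v :=
  Nat.sInf_le ⟨v, rfl⟩

theorem exists_deg_eq_minDeg [Nonempty V] : ∃ v, deg G v = minDeg G := by
  obtain ⟨v, hv⟩ :=
    Nat.sInf_mem (⟨_, Classical.arbitrary V, rfl⟩ : {d | ∃ v, d = deg G v}.Nonempty)
  exact ⟨v, hv.symm⟩

variable [Fintype V] [DecidableRel G.Adj] {n : ℕ}

theorem deg_strongProd_completeGraph (x : V × Fin n) :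
    deg (strongProd G (completeGraph (Fin n))) x = n * G.degree x.1 + (n - 1) := by
  set C : Finset (V × Fin n) := {x.1} ×ˢ {x.2}ᶜ
  set N : Finset (V × Fin n) := G.neighborFinset x.1 ×ˢ univ
  have hdisj : Disjoint C N := by
    simp only [C, N, Finset.disjoint_left, mem_product, mem_singleton, mem_neighborFinset]
    rintro y ⟨hy, -⟩ ⟨hadj, -⟩
    exact G.irrefl (hy ▸ hadj)
  have hnbr : (strongProd G (completeGraph (Fin n))).neighborSet x = ↑(C.disjUnion N hdisj) := by
    ext y
    simp only [C, N, mem_neighborSet, strongProd_completeGraph_adj, coe_disjUnion, Set.mem_union,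
      mem_coe, mem_product, mem_singleton, mem_compl, mem_neighborFinset, mem_univ, and_true]
    grind
  rw [deg, hnbr, Set.ncard_coe_finset, card_disjUnion, card_product, card_product, card_compl]
  simp only [card_singleton, card_univ, Fintype.card_fin, card_neighborFinset_eq_degree]
  ring

theorem minEdgeDeg_strongProd_completeGraph [Nonempty V] (hn : 2 ≤ n) :
    minEdgeDeg (strongProd G (completeGraph (Fin n))) = 2 * n * minDeg G + 2 * n - 4 := by
  obtain ⟨v, hv⟩ := exists_deg_eq_minDeg G
  have hdeg : ∀ x : V × Fin n,
      n * minDeg G + (n - 1) ≤ deg (strongProd G (completeGraph (Fin n))) x := fun x => by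
    rw [deg_strongProd_completeGraph, ← deg_eq_degree]
    exact Nat.add_le_add_right (Nat.mul_le_mul_left n (minDeg_le_deg_s7 G x.1)) _
  have : 2 * n * minDeg G = n * minDeg G + n * minDeg G := by ring
  refine IsLeast.csInf_eq ⟨⟨(v, ⟨0, by omega⟩), (v, ⟨1, by omega⟩), ?_, ?_⟩, ?_⟩
  · exact (strongProd_completeGraph_adj G).mpr (Or.inl ⟨rfl, by simp⟩)
  · rw [deg_strongProd_completeGraph, deg_strongProd_completeGraph, ← deg_eq_degree, hv]
    omega
  · rintro _ ⟨x, y, -, rfl⟩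
    have := hdeg x
    have := hdeg y
    omega

end Degrees

section RestrictedEdgeCuts

variable {α : Type*} {H : SimpleGraph α}

theorem two_le_ncard_supp_iff_exists_adj [Finite α] {v : α} :
    2 ≤ (H.connectedComponentMk v).supp.ncard ↔ ∃ w, H.Adj v w := by
  constructor
  · intro h
    obtain ⟨w, hw, hwv⟩ := Set.exists_ne_of_one_lt_ncard h v
    obtain ⟨p⟩ := (ConnectedComponent.eq.mp ((ConnectedComponent.mem_supp_iff _ _).mp hw)).symm
    exact ⟨_, p.adj_snd (Walk.not_nil_of_ne hwv.symm)⟩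
  · rintro ⟨w, hw⟩
    have hsub : ({v, w} : Set α) ⊆ (H.connectedComponentMk v).supp := by
      rintro u (rfl | rfl)
      · exact ConnectedComponent.connectedComponentMk_mem
      · exact (ConnectedComponent.mem_supp_iff _ _).mpr
          (ConnectedComponent.eq.mpr hw.symm.reachable)
    exact (Set.ncard_pair hw.ne).symm.le.trans (Set.ncard_le_ncard hsub)

theorem ncard_incidenceSet_eq_deg (v : α) : (H.incidenceSet v).ncard = deg H v := by
  classical
  rw [deg, ← Nat.card_coe_set_eq, ← Nat.card_coe_set_eq,
    Nat.card_congr (H.incidenceSetEquivNeighborSet v)]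

theorem ncard_incidenceSet_union_diff [Finite α] {x y : α} (hxy : H.Adj x y) :
    ((H.incidenceSet x ∪ H.incidenceSet y) \ {s(x, y)}).ncard = deg H x + deg H y - 2 := by
  have hunion := Set.ncard_union_add_ncard_inter (H.incidenceSet x) (H.incidenceSet y)
  rw [H.incidenceSet_inter_incidenceSet_of_adj hxy, Set.ncard_singleton,
    ncard_incidenceSet_eq_deg, ncard_incidenceSet_eq_deg] at hunion
  rw [Set.ncard_sdiff_singleton_of_mem
    (Set.mem_union_left _ (H.mk'_mem_incidenceSet_left_iff.mpr hxy))]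
  omega

theorem isRestrictedEdgeCut_incidenceSet_union_diff [Finite α] {x y z : α} (hxy : H.Adj x y)
    (hzx : z ≠ x) (hzy : z ≠ y)
    (hnbr : ∀ v, v ≠ x → v ≠ y → ∃ w, w ≠ x ∧ w ≠ y ∧ H.Adj v w) :
    IsRestrictedEdgeCut H ((H.incidenceSet x ∪ H.incidenceSet y) \ {s(x, y)}) := by
  set S := (H.incidenceSet x ∪ H.incidenceSet y) \ {s(x, y)}
  have hmem : ∀ {u w}, u = x ∨ u = y → w ≠ x → w ≠ y → H.Adj u w → s(u, w) ∈ S := by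
    rintro u w hu hwx hwy huw
    refine ⟨?_, fun h => ?_⟩
    · rcases hu with rfl | rfl
      exacts [Or.inl ⟨huw, Sym2.mem_mk_left _ _⟩, Or.inr ⟨huw, Sym2.mem_mk_left _ _⟩]
    · rcases Sym2.eq_iff.mp h with ⟨-, h⟩ | ⟨-, h⟩
      exacts [hwy h, hwx h]
  have hnot : ∀ {u w}, u ≠ x → u ≠ y → w ≠ x → w ≠ y → s(u, w) ∉ S := by
    rintro u w hux huy hwx hwy ⟨hx | hy, -⟩
    · rcases Sym2.mem_iff.mp hx.2 with h | h
      exacts [hux h.symm, hwx h.symm]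
    · rcases Sym2.mem_iff.mp hy.2 with h | h
      exacts [huy h.symm, hwy h.symm]
  refine ⟨fun e he => he.1.elim (·.1) (·.1), fun hconn => ?_,
    fun v => two_le_ncard_supp_iff_exists_adj.mpr ?_⟩
  · obtain ⟨p⟩ := hconn.preconnected x z
    obtain ⟨d, -, hd, hd'⟩ := p.exists_boundary_dart {x, y} (by simp) (by simp [hzx, hzy])
    simp only [Set.mem_insert_iff, Set.mem_singleton_iff, not_or] at hd hd'
    obtain ⟨hadj, hdS⟩ := deleteEdges_adj.mp d.adj
    exact hdS (hmem hd hd'.1 hd'.2 hadj)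
  · by_cases hvx : v = x
    · subst hvx
      exact ⟨y, deleteEdges_adj.mpr ⟨hxy, fun h => h.2 rfl⟩⟩
    by_cases hvy : v = y
    · subst hvy
      exact ⟨x, deleteEdges_adj.mpr ⟨hxy.symm, fun h => h.2 Sym2.eq_swap⟩⟩
    obtain ⟨w, hwx, hwy, hvw⟩ := hnbr v hvx hvy
    exact ⟨w, deleteEdges_adj.mpr ⟨hvw, hnot hvx hvy hwx hwy⟩⟩

theorem exists_finset_of_isRestrictedEdgeCut [Fintype α] [DecidableEq α] [DecidableRel H.Adj]
    [Nonempty α] {S : Set (Sym2 α)} (hS : IsRestrictedEdgeCut H S) :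
    ∃ X : Finset α, X.Nonempty ∧ Xᶜ.Nonempty ∧ (∀ x, ∃ y, H.Adj x y ∧ (y ∈ X ↔ x ∈ X)) ∧
      #(H.interedges X Xᶜ) ≤ S.ncard := by
  classical
  obtain ⟨-, hdisc, hcomp⟩ := hS
  obtain ⟨p, q, hpq⟩ : ∃ p q, ¬ (H.deleteEdges S).Reachable p q := by
    by_contra! h
    exact hdisc ⟨h⟩
  set X : Finset α := {x | (H.deleteEdges S).Reachable p x}
  have hX : ∀ {x}, x ∈ X ↔ (H.deleteEdges S).Reachable p x := by simp [X]
  have hcross : ∀ e ∈ H.interedges X Xᶜ, s(e.1, e.2) ∈ S := by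
    rintro ⟨x, y⟩ he
    rw [mk_mem_interedges_iff, mem_compl, hX, hX] at he
    by_contra hs
    exact he.2.1 (he.1.trans (deleteEdges_adj.mpr ⟨he.2.2, hs⟩).reachable)
  have hinj : Set.InjOn (fun e : α × α => s(e.1, e.2)) (H.interedges X Xᶜ) := by
    rintro ⟨x, y⟩ he ⟨x', y'⟩ he' h
    rw [mem_coe, mk_mem_interedges_iff, mem_compl] at he he'
    rcases Sym2.eq_iff.mp h with ⟨rfl, rfl⟩ | ⟨rfl, -⟩
    exacts [rfl, (he'.2.1 he.1).elim]
  refine ⟨X, ⟨p, hX.mpr (Reachable.refl p)⟩, ⟨q, mem_compl.mpr (hX.not.mpr hpq)⟩,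
    fun x => ?_, ?_⟩
  · obtain ⟨y, hy⟩ := two_le_ncard_supp_iff_exists_adj.mp (hcomp x)
    have hpy : (H.deleteEdges S).Reachable p y ↔ (H.deleteEdges S).Reachable p x :=
      ⟨fun h => h.trans hy.symm.reachable, fun h => h.trans hy.reachable⟩
    exact ⟨y, (deleteEdges_adj.mp hy).1, hX.trans (hpy.trans hX.symm)⟩
  · rw [← card_image_of_injOn hinj, ← Set.ncard_coe_finset, coe_image]
    exact Set.ncard_le_ncard (Set.image_subset_iff.mpr hcross)

end RestrictedEdgeCuts

theorem exists_isRestrictedEdgeCut_ncard_eq_s7 {V : Type*} [Fintype V] (G : SimpleGraph V)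
    [DecidableRel G.Adj] [Nonempty V] {n : ℕ} (hn : 4 ≤ n) :
    ∃ S, IsRestrictedEdgeCut (strongProd G (completeGraph (Fin n))) S ∧
      S.ncard = 2 * n * minDeg G + 2 * n - 4 := by
  obtain ⟨v, hv⟩ := exists_deg_eq_minDeg G
  have hxy : (strongProd G (completeGraph (Fin n))).Adj (v, ⟨0, by omega⟩) (v, ⟨1, by omega⟩) :=
    (strongProd_completeGraph_adj G).mpr (Or.inl ⟨rfl, by simp⟩)
  refine ⟨_, isRestrictedEdgeCut_incidenceSet_union_diff hxy (z := (v, ⟨2, by omega⟩))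
    (by simp) (by simp) ?_, ?_⟩
  · rintro ⟨w, i⟩ hx hy
    obtain ⟨j, -, hj⟩ := exists_mem_notMem_of_card_lt_card
      (s := {i, ⟨0, by omega⟩, ⟨1, by omega⟩}) (t := univ)
      (card_le_three.trans_lt (by rw [card_univ, Fintype.card_fin]; omega))
    simp only [mem_insert, mem_singleton, not_or] at hj
    refine ⟨(w, j), fun h => hj.2.1 (congrArg Prod.snd h), fun h => hj.2.2 (congrArg Prod.snd h),
      (strongProd_completeGraph_adj G).mpr (Or.inl ⟨rfl, Ne.symm hj.1⟩)⟩
  · rw [ncard_incidenceSet_union_diff hxy, deg_strongProd_completeGraph,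
      deg_strongProd_completeGraph, ← deg_eq_degree, hv]
    have : 2 * n * minDeg G = n * minDeg G + n * minDeg G := by ring
    omega

theorem sum_sum_neighborFinset_eq_sum_edgeFinset {V : Type*} [Fintype V] [DecidableEq V]
    (G : SimpleGraph V) [DecidableRel G.Adj] {M : Type*} [AddCommMonoid M] (f : V → V → M) :
    ∑ v, ∑ w ∈ G.neighborFinset v, f v w =
      ∑ e ∈ G.edgeFinset, Sym2.lift ⟨fun v w => f v w + f w v, fun _ _ => add_comm _ _⟩ e := by
  have hfst : ∀ v, ∑ w ∈ G.neighborFinset v, f v w =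
      ∑ d ∈ {d : G.Dart | d.fst = v}, f d.fst d.snd := by
    intro v
    rw [dart_fst_fiber, sum_image fun _ _ _ _ h => G.dartOfNeighborSet_injective v h]
    exact sum_subtype (p := (· ∈ G.neighborSet v)) _ (fun w => G.mem_neighborFinset v w) (f v)
  have hedge : ∀ e ∈ G.edgeFinset,
      Sym2.lift ⟨fun v w => f v w + f w v, fun _ _ => add_comm _ _⟩ e =
        ∑ d ∈ {d : G.Dart | d.edge = e}, f d.fst d.snd := by
    intro e he
    induction e using Sym2.ind with
    | h v w =>
      let d : G.Dart := ⟨(v, w), mem_edgeFinset.mp he⟩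
      rw [show s(v, w) = d.edge from rfl, Dart.edge_fiber, sum_pair d.symm_ne.symm]
      rfl
  rw [sum_congr rfl fun v _ => hfst v, sum_congr rfl hedge, sum_fiberwise,
    sum_fiberwise_of_maps_to fun d _ => mem_edgeFinset.mpr d.edge_mem]

/-- For a vertex set `X` of `G ⊠ K_n`, `a v` and `b v` stand for the numbers of vertices of the
clique `{v} × K_n` inside and outside `X`; `cutWeight G a b` is then the number of edges between
`X` and its complement (`card_interedges_compl_eq_cutWeight`). -/
def edgeWeight {V : Type*} (a b : V → ℕ) : Sym2 V → ℕ :=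
  Sym2.lift ⟨fun v w => a v * b w + a w * b v, fun _ _ => add_comm _ _⟩

theorem edgeWeight_mk {V : Type*} {a b : V → ℕ} (v w : V) :
    edgeWeight a b s(v, w) = a v * b w + a w * b v := rfl

theorem mul_le_edgeWeight {V : Type*} {a b : V → ℕ} {n k : ℕ} (hab : ∀ v, a v + b v = n)
    {v : V} (hka : k ≤ a v) (hkb : k ≤ b v) (w : V) : k * n ≤ edgeWeight a b s(v, w) :=
  calc k * n = k * b w + a w * k := by rw [← hab w]; ring
    _ ≤ a v * b w + a w * b v :=
      add_le_add (Nat.mul_le_mul_right _ hka) (Nat.mul_le_mul_left _ hkb)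

section CutWeight

variable {V : Type*} [Fintype V] (G : SimpleGraph V) [DecidableRel G.Adj] (a b : V → ℕ)

def cutWeight : ℕ := ∑ v, a v * b v + ∑ e ∈ G.edgeFinset, edgeWeight a b e

theorem edgeConn_le_card_edgesBetween (A : Set V) [DecidablePred (· ∈ edgesBetween G A Aᶜ)]
    (hA : A.Nonempty) (hA' : Aᶜ.Nonempty) :
    edgeConn G ≤ #{e ∈ G.edgeFinset | e ∈ edgesBetween G A Aᶜ} := by
  refine Nat.sInf_le ⟨_, fun e he => mem_edgeFinset.mp (mem_filter.mp he).1,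
    Set.ncard_coe_finset _, fun hconn => ?_⟩
  obtain ⟨u, hu⟩ := hA
  obtain ⟨w, hw⟩ := hA'
  obtain ⟨p⟩ := hconn.preconnected u w
  obtain ⟨d, -, hd, hd'⟩ := p.exists_boundary_dart A hu hw
  obtain ⟨hadj, hnot⟩ := deleteEdges_adj.mp d.adj
  exact hnot (mem_coe.mpr (mem_filter.mpr
    ⟨mem_edgeFinset.mpr hadj, hadj, d.fst, hd, d.snd, hd', rfl⟩))

variable {G a b} {n : ℕ}

theorem mul_add_sum_le_cutWeight (v : V) {F : Finset (Sym2 V)} (hF : F ⊆ G.edgeFinset) :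
    a v * b v + ∑ e ∈ F, edgeWeight a b e ≤ cutWeight G a b :=
  add_le_add (single_le_sum (f := fun u => a u * b u) (fun _ _ => Nat.zero_le _) (mem_univ v))
    (sum_le_sum_of_subset hF)

theorem card_mul_le_sum_edgesBetween {k : ℕ} (A : Set V)
    [DecidablePred (· ∈ edgesBetween G A Aᶜ)]
    (hk : ∀ e ∈ edgesBetween G A Aᶜ, k ≤ edgeWeight a b e) :
    #{e ∈ G.edgeFinset | e ∈ edgesBetween G A Aᶜ} * k ≤
      ∑ e ∈ G.edgeFinset with e ∈ edgesBetween G A Aᶜ, edgeWeight a b e := by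
  rw [← smul_eq_mul]
  exact card_nsmul_le_sum _ _ _ fun e he => hk e (mem_filter.mp he).2

theorem mul_edgeConn_le_cutWeight {k : ℕ} (A : Set V) (hA : A.Nonempty) (hA' : Aᶜ.Nonempty)
    (hk : ∀ e ∈ edgesBetween G A Aᶜ, k ≤ edgeWeight a b e) :
    k * edgeConn G ≤ cutWeight G a b := by
  classical
  calc k * edgeConn G ≤ #{e ∈ G.edgeFinset | e ∈ edgesBetween G A Aᶜ} * k := by
        rw [mul_comm]; exact Nat.mul_le_mul_right _ (edgeConn_le_card_edgesBetween G A hA hA')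
    _ ≤ ∑ e ∈ G.edgeFinset with e ∈ edgesBetween G A Aᶜ, edgeWeight a b e :=
        card_mul_le_sum_edgesBetween A hk
    _ ≤ cutWeight G a b := le_add_self.trans (mul_add_sum_le_cutWeight hA.some (filter_subset _ _))

theorem sq_mul_edgeConn_le_cutWeight (hab : ∀ v, a v + b v = n) (ha : ∃ v, 0 < a v)
    (hb : ∃ v, 0 < b v) (hsplit : ∀ v, 0 < a v → b v = 0) :
    n ^ 2 * edgeConn G ≤ cutWeight G a b := by
  rw [sq]
  refine mul_edgeConn_le_cutWeight {u | b u = 0} ?_ ?_ ?_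
  · obtain ⟨v, hv⟩ := ha
    exact ⟨v, hsplit v hv⟩
  · obtain ⟨v, hv⟩ := hb
    exact ⟨v, hv.ne'⟩
  · rintro _ ⟨-, x, hx, y, hy, rfl⟩
    simp only [Set.mem_ofPred_eq, Set.mem_compl_iff] at hx hy
    have := hab x
    have := hab y
    have := hsplit y
    rw [edgeWeight_mk, show a x = n by omega, show b y = n by omega]
    exact Nat.le_add_right _ _

variable [DecidableEq V]

theorem sum_incidenceFinset_add_le_cutWeight_add {v w : V} (hvw : G.Adj v w) :
    a v * b v + a w * b w +
        (∑ e ∈ G.incidenceFinset v, edgeWeight a b e + ∑ e ∈ G.incidenceFinset w, edgeWeight a b e)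
      ≤ cutWeight G a b + edgeWeight a b s(v, w) := by
  have hinter : G.incidenceFinset v ∩ G.incidenceFinset w = {s(v, w)} := by
    rw [← coe_inj, coe_inter, coe_incidenceFinset, coe_incidenceFinset, coe_singleton,
      G.incidenceSet_inter_incidenceSet_of_adj hvw]
  rw [← sum_union_inter, hinter, sum_singleton]
  have hloops : a v * b v + a w * b w ≤ ∑ u, a u * b u :=
    calc a v * b v + a w * b w = ∑ u ∈ {v, w}, a u * b u :=
        (sum_pair (f := fun u => a u * b u) hvw.ne).symm
      _ ≤ _ := sum_le_sum_of_subset (subset_univ _)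
  have hedges := sum_le_sum_of_subset (f := edgeWeight a b)
    (union_subset (G.incidenceFinset_subset v) (G.incidenceFinset_subset w))
  unfold cutWeight
  omega

variable (hab : ∀ v, a v + b v = n)
include hab

theorem card_mul_le_sum_edgeWeight {k : ℕ} {v : V} (hka : k ≤ a v) (hkb : k ≤ b v)
    {F : Finset (Sym2 V)} (hF : F ⊆ G.incidenceFinset v) :
    #F * (k * n) ≤ ∑ e ∈ F, edgeWeight a b e := by
  rw [← smul_eq_mul]
  refine card_nsmul_le_sum _ _ _ fun e he => ?_
  obtain ⟨w, rfl⟩ := Sym2.mem_iff_exists.mp ((G.mem_incidenceFinset v e).mp (hF he)).2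
  exact mul_le_edgeWeight hab hka hkb w

theorem edgeWeight_add_le_sum_incidenceFinset {v : V} (hav : 0 < a v) (hbv : 0 < b v)
    {e : Sym2 V} (he : e ∈ G.incidenceFinset v) :
    edgeWeight a b e + G.degree v * n ≤ ∑ e ∈ G.incidenceFinset v, edgeWeight a b e + n := by
  rw [← add_sum_erase _ _ he]
  have := card_mul_le_sum_edgeWeight (k := 1) hab hav hbv (erase_subset e (G.incidenceFinset v))
  rw [card_erase_of_mem he, card_incidenceFinset_eq_degree, one_mul, Nat.sub_one_mul] at this
  omega

theorem two_mul_degree_le_cutWeight {v : V} (hav : 2 ≤ a v) (hbv : 2 ≤ b v) :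
    2 * n * G.degree v + 2 * n - 4 ≤ cutWeight G a b := by
  have hloop : 2 * n ≤ a v * b v + 4 := by rw [← hab v]; nlinarith
  have hstar := card_mul_le_sum_edgeWeight hab hav hbv (subset_refl (G.incidenceFinset v))
  rw [card_incidenceFinset_eq_degree] at hstar
  have := mul_add_sum_le_cutWeight (a := a) (b := b) v (G.incidenceFinset_subset v)
  have : 2 * n * G.degree v = G.degree v * (2 * n) := by ring
  omega

theorem degree_add_degree_le_cutWeight {v w : V} (hvw : G.Adj v w) (hav : 0 < a v)
    (hbv : 0 < b v) (haw : 0 < a w) (hbw : 0 < b w) :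
    n * (G.degree v + G.degree w) + 2 * n - 4 ≤ cutWeight G a b := by
  have hv := edgeWeight_add_le_sum_incidenceFinset hab hav hbv
    ((G.mem_incidenceFinset v _).mpr (G.mk'_mem_incidenceSet_left_iff.mpr hvw))
  have hw := edgeWeight_add_le_sum_incidenceFinset hab haw hbw
    ((G.mem_incidenceFinset w _).mpr (G.mk'_mem_incidenceSet_right_iff.mpr hvw))
  have htot := sum_incidenceFinset_add_le_cutWeight_add (a := a) (b := b) hvw
  have hloopv : n ≤ a v * b v + 1 := by rw [← hab v]; nlinarith
  have hloopw : n ≤ a w * b w + 1 := by rw [← hab w]; nlinarith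
  have hvw' : 2 * n ≤ edgeWeight a b s(v, w) + 2 := by
    rw [edgeWeight_mk]; nlinarith [hab v, hab w]
  have : n * (G.degree v + G.degree w) = G.degree v * n + G.degree w * n := by ring
  omega

theorem mul_edgeConn_add_le_cutWeight (A : Set V) (hA : A.Nonempty) (hA' : Aᶜ.Nonempty)
    (hk : ∀ e ∈ edgesBetween G A Aᶜ, n * (n - 1) ≤ edgeWeight a b e) {v : V} (hav : 0 < a v)
    (hbv : 0 < b v) :
    n * (n - 2) * edgeConn G + n * G.degree v + (n - 1) ≤ cutWeight G a b := by
  classical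
  set F := {e ∈ G.edgeFinset | e ∈ edgesBetween G A Aᶜ}
  have hconn : edgeConn G ≤ #F := edgeConn_le_card_edgesBetween G A hA hA'
  have hF : #F * (n * (n - 1)) ≤ ∑ e ∈ F, edgeWeight a b e := card_mul_le_sum_edgesBetween A hk
  have hI := card_mul_le_sum_edgeWeight (k := 1) hab hav hbv
    (sdiff_subset : G.incidenceFinset v \ F ⊆ _)
  have hcard : G.degree v ≤ #(G.incidenceFinset v \ F) + #F := by
    rw [← card_incidenceFinset_eq_degree]
    exact card_le_card_sdiff_add_card
  have hloop : n ≤ a v * b v + 1 := by rw [← hab v]; nlinarith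
  have htot := mul_add_sum_le_cutWeight (a := a) (b := b) (F := F ∪ (G.incidenceFinset v \ F)) v
    (union_subset (filter_subset _ _) (sdiff_subset.trans (G.incidenceFinset_subset v)))
  rw [sum_union disjoint_sdiff] at htot
  obtain ⟨m, rfl⟩ : ∃ m, n = m + 2 := ⟨n - 2, by have := hab v; omega⟩
  simp only [Nat.add_sub_cancel, show m + 2 - 1 = m + 1 by omega, one_mul] at hF hI ⊢
  nlinarith [Nat.mul_le_mul_left ((m + 2) * m) hconn, Nat.mul_le_mul_left (m + 2) hcard]

theorem mul_edgeConn_add_le_cutWeight_of_forall_le_one (hn : 3 ≤ n)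
    (hlop : ∀ v, a v ≤ 1 ∨ b v ≤ 1)
    (hadj : ∀ v w, G.Adj v w → 0 < a v → 0 < b v → a w = 0 ∨ b w = 0)
    (ha1 : ∀ v, a v = 1 → ∃ w, G.Adj v w ∧ 0 < a w)
    (hb1 : ∀ v, b v = 1 → ∃ w, G.Adj v w ∧ 0 < b w) {v : V} (hav : 0 < a v) (hbv : 0 < b v) :
    n * (n - 2) * edgeConn G + n * G.degree v + (n - 1) ≤ cutWeight G a b := by
  obtain ⟨x, y, hx, hy⟩ : ∃ x y, b x ≤ 1 ∧ 1 < b y := by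
    have := hab v
    rcases hlop v with hav1 | hbv1
    · obtain ⟨w, hvw, haw⟩ := ha1 v (by omega)
      have := hab w
      have := hadj v w hvw hav hbv
      exact ⟨w, v, by omega, by omega⟩
    · obtain ⟨w, hvw, hbw⟩ := hb1 v (by omega)
      have := hab w
      have := hadj v w hvw hav hbv
      exact ⟨v, w, by omega, by omega⟩
  refine mul_edgeConn_add_le_cutWeight hab {u | b u ≤ 1} ⟨x, hx⟩ ⟨y, not_le.mpr hy⟩ ?_ hav hbv
  rintro _ ⟨hxy, x, hx, y, hy, rfl⟩
  simp only [Set.mem_ofPred_eq, Set.mem_compl_iff, not_le] at hx hy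
  have := hab x
  have := hab y
  have := (hlop y).resolve_right (by omega)
  rw [edgeWeight_mk]
  refine le_trans ?_ (Nat.le_add_right _ _)
  rcases Nat.eq_zero_or_pos (b x) with hbx | hbx
  · rw [show a x = n by omega]
    exact Nat.mul_le_mul_left _ (by omega)
  · have := hadj x y hxy (by omega) hbx
    rw [show b y = n by omega, mul_comm]
    exact Nat.mul_le_mul_right _ (by omega)

end CutWeight

-- `(n - 2)(2nd + 2n - 4) - n(nd + n - 3) = (n - 4)nd + n² - 5n + 8 ≥ 0`
theorem mul_add_le_of_two_mul_add_le_sq {n d l : ℕ} (hn : 4 ≤ n)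
    (h : 2 * n * d + 2 * n - 4 ≤ n ^ 2 * l) : n * d + n ≤ n * (n - 2) * l + 3 := by
  obtain ⟨m, rfl⟩ : ∃ m, n = m + 4 := ⟨n - 4, by omega⟩
  have h' : 2 * (m + 4) * d + 2 * m + 4 ≤ (m + 4) ^ 2 * l := by omega
  rw [show m + 4 - 2 = m + 2 by omega]
  by_contra! hlt
  nlinarith [Nat.mul_le_mul_left (m + 2) h', Nat.mul_lt_mul_of_pos_left hlt (by omega : 0 < m + 4)]

theorem two_mul_minDeg_le_cutWeight {V : Type*} [Fintype V] [DecidableEq V]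
    {G : SimpleGraph V} [DecidableRel G.Adj] {a b : V → ℕ} {n : ℕ} (hab : ∀ v, a v + b v = n)
    (hn : 4 ≤ n) (hlam : 2 * n * minDeg G + 2 * n - 4 ≤ n ^ 2 * edgeConn G)
    (ha : ∃ v, 0 < a v) (hb : ∃ v, 0 < b v)
    (ha1 : ∀ v, a v = 1 → ∃ w, G.Adj v w ∧ 0 < a w)
    (hb1 : ∀ v, b v = 1 → ∃ w, G.Adj v w ∧ 0 < b w) :
    2 * n * minDeg G + 2 * n - 4 ≤ cutWeight G a b := by
  have hδ : ∀ v, n * minDeg G ≤ n * G.degree v := fun v =>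
    Nat.mul_le_mul_left n (deg_eq_degree G v ▸ minDeg_le_deg_s7 G v)
  have : 2 * n * minDeg G = n * minDeg G + n * minDeg G := by ring
  by_cases hbal : ∃ v, 2 ≤ a v ∧ 2 ≤ b v
  · obtain ⟨v, hav, hbv⟩ := hbal
    have := two_mul_degree_le_cutWeight (G := G) hab hav hbv
    have := hδ v
    have : 2 * n * G.degree v = n * G.degree v + n * G.degree v := by ring
    omega
  by_cases hadj : ∃ v w, G.Adj v w ∧ 0 < a v ∧ 0 < b v ∧ 0 < a w ∧ 0 < b w
  · obtain ⟨v, w, hvw, hav, hbv, haw, hbw⟩ := hadj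
    have hcut := degree_add_degree_le_cutWeight hab hvw hav hbv haw hbw
    rw [mul_add] at hcut
    have := hδ v
    have := hδ w
    omega
  push Not at hbal hadj
  by_cases hsplit : ∃ v, 0 < a v ∧ 0 < b v
  · obtain ⟨v, hav, hbv⟩ := hsplit
    have := mul_edgeConn_add_le_cutWeight_of_forall_le_one hab (by omega)
      (fun u => by have := hbal u; omega)
      (fun u w huw hau hbu => by have := hadj u w huw hau hbu; omega) ha1 hb1 hav hbv
    have := hδ v
    have := mul_add_le_of_two_mul_add_le_sq hn hlam
    omega
  push Not at hsplit
  exact hlam.trans (sq_mul_edgeConn_le_cutWeight hab ha hb fun v hv => by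
    have := hsplit v hv; omega)

section FiberCard

variable {V : Type*} [DecidableEq V] (G : SimpleGraph V) {n : ℕ}

def fiberCard (X : Finset (V × Fin n)) (v : V) : ℕ := #{x ∈ X | x.1 = v}

theorem exists_adj_fiberCard_pos {Y : Finset (V × Fin n)}
    (hY : ∀ y ∈ Y, ∃ y' ∈ Y, (strongProd G (completeGraph (Fin n))).Adj y y') {v : V}
    (hv : fiberCard Y v = 1) : ∃ w, G.Adj v w ∧ 0 < fiberCard Y w := by
  obtain ⟨y, hy⟩ := card_eq_one.mp hv
  have hyY : y ∈ ({y} : Finset _) := mem_singleton_self y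
  rw [← hy, mem_filter] at hyY
  obtain ⟨y', hy'Y, hadj⟩ := hY y hyY.1
  rcases (strongProd_completeGraph_adj G).mp hadj with ⟨h1, h2⟩ | hG
  · have : y' ∈ ({y} : Finset _) := hy ▸ mem_filter.mpr ⟨hy'Y, h1.symm.trans hyY.2⟩
    exact absurd (congrArg Prod.snd (mem_singleton.mp this).symm) h2
  · exact ⟨y'.1, hyY.2 ▸ hG, card_pos.mpr ⟨y', mem_filter.mpr ⟨hy'Y, rfl⟩⟩⟩

variable [Fintype V]

theorem sum_fst_eq_sum_fiberCard (X : Finset (V × Fin n)) (f : V → ℕ) :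
    ∑ x ∈ X, f x.1 = ∑ v, fiberCard X v * f v := by
  rw [← sum_fiberwise' X Prod.fst f]
  simp only [sum_const, smul_eq_mul, fiberCard]

theorem fiberCard_add_fiberCard_compl (X : Finset (V × Fin n)) (v : V) :
    fiberCard X v + fiberCard Xᶜ v = n := by
  rw [fiberCard, fiberCard, ← card_union_of_disjoint (disjoint_filter_filter disjoint_compl_right),
    ← filter_union, union_compl,
    show ({x | x.1 = v} : Finset (V × Fin n)) = {v} ×ˢ univ by ext ⟨w, i⟩; simp [eq_comm],
    card_product]
  simp

variable [DecidableRel G.Adj] [DecidableRel (strongProd G (completeGraph (Fin n))).Adj]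

theorem card_interedges_compl_eq_cutWeight (X : Finset (V × Fin n)) :
    #((strongProd G (completeGraph (Fin n))).interedges X Xᶜ) =
      cutWeight G (fiberCard X) (fiberCard Xᶜ) := by
  have hadj : ∀ x ∈ X, ∀ y ∈ Xᶜ,
      (if (strongProd G (completeGraph (Fin n))).Adj x y then 1 else 0) =
        (if x.1 = y.1 then 1 else 0) + if G.Adj x.1 y.1 then 1 else 0 := by
    intro x hx y hy
    have hxy : x ≠ y := fun h => mem_compl.mp hy (h ▸ hx)
    by_cases h1 : x.1 = y.1
    · have : x.2 ≠ y.2 := fun h2 => hxy (Prod.ext h1 h2)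
      simp [strongProd_completeGraph_adj, h1, this]
    · simp [strongProd_completeGraph_adj, h1]
  have hinner : ∀ x : V × Fin n,
      ∑ y ∈ Xᶜ, ((if x.1 = y.1 then 1 else 0) + if G.Adj x.1 y.1 then 1 else 0) =
        fiberCard Xᶜ x.1 + ∑ w ∈ G.neighborFinset x.1, fiberCard Xᶜ w := by
    intro x
    rw [sum_fst_eq_sum_fiberCard Xᶜ
      (fun w => (if x.1 = w then 1 else 0) + if G.Adj x.1 w then 1 else 0)]
    simp only [mul_add, mul_boole, sum_add_distrib, sum_ite_eq, mem_univ, if_true,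
      neighborFinset_eq_filter, sum_filter]
  rw [interedges_def, card_filter, sum_product,
    sum_congr rfl fun x hx => sum_congr rfl (hadj x hx), sum_congr rfl fun x _ => hinner x,
    sum_fst_eq_sum_fiberCard X
      (fun v => fiberCard Xᶜ v + ∑ w ∈ G.neighborFinset v, fiberCard Xᶜ w),
    cutWeight, edgeWeight, ← sum_sum_neighborFinset_eq_sum_edgeFinset]
  simp only [mul_add, mul_sum, sum_add_distrib]

theorem two_mul_minDeg_le_ncard_of_isRestrictedEdgeCut [Nonempty V] (hn : 4 ≤ n)
    (hlam : 2 * n * minDeg G + 2 * n - 4 ≤ n ^ 2 * edgeConn G) {S : Set (Sym2 (V × Fin n))}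
    (hS : IsRestrictedEdgeCut (strongProd G (completeGraph (Fin n))) S) :
    2 * n * minDeg G + 2 * n - 4 ≤ S.ncard := by
  have : Nonempty (V × Fin n) := ⟨(Classical.arbitrary V, ⟨0, by omega⟩)⟩
  obtain ⟨X, ⟨x, hx⟩, ⟨y, hy⟩, hside, hcard⟩ := exists_finset_of_isRestrictedEdgeCut hS
  have hpos : ∀ {Y : Finset (V × Fin n)} {z}, z ∈ Y → 0 < fiberCard Y z.1 :=
    fun hz => card_pos.mpr ⟨_, mem_filter.mpr ⟨hz, rfl⟩⟩
  refine (two_mul_minDeg_le_cutWeight (fiberCard_add_fiberCard_compl X) hn hlam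
    ⟨x.1, hpos hx⟩ ⟨y.1, hpos hy⟩ ?_ ?_).trans
    ((card_interedges_compl_eq_cutWeight G X).ge.trans hcard)
  · refine fun v => exists_adj_fiberCard_pos G fun z hz => ?_
    obtain ⟨z', hadj, hz'⟩ := hside z
    exact ⟨z', hz'.mpr hz, hadj⟩
  · refine fun v => exists_adj_fiberCard_pos G fun z hz => ?_
    obtain ⟨z', hadj, hz'⟩ := hside z
    exact ⟨z', mem_compl.mpr fun h => mem_compl.mp hz (hz'.mp h), hadj⟩

end FiberCard

theorem maximallyRestricted_strongProd_completeGraph_general {V : Type*} [Fintype V]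
    (G : SimpleGraph V) (m n : ℕ)
    (hG : G.Connected) (hn : 4 ≤ n)
    (h : 2 * n * minDeg G + 2 * n - 4 ≤
      min (n ^ 2 * edgeConn G) ((n - 1) * (m + 2 * numEdges G))) :
    restEdgeConn (strongProd G (SimpleGraph.completeGraph (Fin n))) =
      minEdgeDeg (strongProd G (SimpleGraph.completeGraph (Fin n))) := by
  classical
  have := hG.nonempty
  rw [minEdgeDeg_strongProd_completeGraph G (by omega)]
  exact IsLeast.csInf_eq ⟨exists_isRestrictedEdgeCut_ncard_eq_s7 G hn, fun _ ⟨S, hS, hk⟩ =>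
    hk ▸ two_mul_minDeg_le_ncard_of_isRestrictedEdgeCut G hn (h.trans (min_le_left _ _)) hS⟩

theorem maximallyRestricted_strongProd_completeGraph {V : Type*} [Fintype V]
    (G : SimpleGraph V) (m n : ℕ) (hm : Fintype.card V = m) (hnt : 2 ≤ m)
    (hG : G.Connected) (hn : 4 ≤ n)
    (h : 2 * n * minDeg G + 2 * n - 4 ≤
      min (n ^ 2 * edgeConn G) ((n - 1) * (m + 2 * numEdges G))) :
    restEdgeConn (strongProd G (SimpleGraph.completeGraph (Fin n))) =
      minEdgeDeg (strongProd G (SimpleGraph.completeGraph (Fin n))) :=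
  maximallyRestricted_strongProd_completeGraph_general G m n hG hn h
end
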